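/- Let (Ω, ℱ, P_S), (X, 𝒳, P_x), and (D, 𝒟, P_d) be probability spaces and let V ⊆ Ω × X × D be measurable with respect to the product σ-algebra. Let M ≥ 1 be an integer and α₁, α₂, l, δ₁, δ₂ ∈ (0,1) with α₁ < l·δ₂ and M ≥ (1/(2·α₂²))·ln(1/((1−l)·δ₂)). If P_S{ω ∈ Ω : (P_x ⊗ P_d^M)({(x, d₁,…,d_M) : (ω, x, d_j) ∈ V for some j ∈ {1,…,M}}) ≤ α₁} ≥ 1 − δ₁, then P_S{ω ∈ Ω : P_x({x ∈ X : P_d({d : (ω,x,d) ∈ V}) ≤ α₂}) ≥ 1 − α₁/(l·δ₂)} ≥ 1 − δ₁. -/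

import Mathlib

open MeasureTheory

/-! For a fixed sample `ω`, let `p x = P_d (V_{ω,x})`. By independence of the `M` disturbances the
one-to-many violation probability is `∫ 1 - (1 - p x) ^ M dP_x`. Since `1 - α ≤ exp (-2α²)`, the
bound on `M` gives `(1 - α₂) ^ M ≤ (1 - l) δ₂ ≤ 1 - l δ₂`, so the integrand is at least `l δ₂`
wherever `p x > α₂`, and Markov's inequality bounds `P_x {p > α₂}` by `α₁ / (l δ₂)`. Hence every
sample in the confidence event of the hypothesis lies in that of the conclusion. -/

theorem one_sub_le_exp_neg_two_mul_sq {a : ℝ} (ha : 0 ≤ a) :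
    1 - a ≤ Real.exp (-(2 * a ^ 2)) := by
  set g : ℝ → ℝ := fun a => (1 - a) * Real.exp (2 * a ^ 2)
  have hg : ∀ x, HasDerivAt g (Real.exp (2 * x ^ 2) * (4 * x * (1 - x) - 1)) x := fun x => by
    refine (((hasDerivAt_id' x).const_sub 1).mul
      (((hasDerivAt_pow 2 x).const_mul 2).exp)).congr_deriv ?_
    push_cast
    ring
  have hanti : Antitone g := antitone_of_deriv_nonpos (fun x => (hg x).differentiableAt)
    fun x => (hg x).deriv ▸
      mul_nonpos_of_nonneg_of_nonpos (Real.exp_pos _).le (by nlinarith [sq_nonneg (2 * x - 1)])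
  have hg_le : g a ≤ 1 := by simpa [g] using hanti ha
  rwa [Real.exp_neg, inv_eq_one_div, le_div_iff₀ (Real.exp_pos _)]

theorem one_sub_pow_le_of_log_div_le {α ε : ℝ} {M : ℕ} (hα₀ : 0 < α) (hα₁ : α ≤ 1) (hε : 0 < ε)
    (hM : 1 / (2 * α ^ 2) * Real.log (1 / ε) ≤ M) : (1 - α) ^ M ≤ ε := by
  have hlog : -(2 * α ^ 2 * M) ≤ Real.log ε := by
    rw [one_div_mul_eq_div, div_le_iff₀ (by positivity), one_div, Real.log_inv] at hM
    linarith
  calc (1 - α) ^ M ≤ Real.exp (-(2 * α ^ 2)) ^ M :=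
        pow_le_pow_left₀ (by linarith) (one_sub_le_exp_neg_two_mul_sq hα₀.le) M
    _ = Real.exp (-(2 * α ^ 2 * M)) := by rw [← Real.exp_nat_mul]; ring_nf
    _ ≤ ε := (Real.exp_le_exp.2 hlog).trans_eq (Real.exp_log hε)

theorem measure_pi_exists_mem {ι D : Type*} [Fintype ι] [MeasurableSpace D] (μ : Measure D)
    [IsProbabilityMeasure μ] {s : Set D} (hs : MeasurableSet s) :
    Measure.pi (fun _ : ι => μ) {x | ∃ i, x i ∈ s} = 1 - (1 - μ s) ^ Fintype.card ι := by
  have hcompl : {x : ι → D | ∃ i, x i ∈ s} = (Set.univ.pi fun _ => sᶜ)ᶜ := by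
    ext x; simp
  rw [hcompl, prob_compl_eq_one_sub (MeasurableSet.univ_pi fun _ => hs.compl), Measure.pi_pi,
    prob_compl_eq_one_sub hs, Finset.prod_const, Finset.card_univ]

theorem mul_measure_setOf_lt_le_prod_pi {X D ι : Type*} [MeasurableSpace X] [MeasurableSpace D]
    [Fintype ι] (Px : Measure X) (Pd : Measure D) [SFinite Px] [IsProbabilityMeasure Pd]
    {T : Set (X × D)} (hT : MeasurableSet T) {β κ : ENNReal}
    (hκ : κ ≤ 1 - (1 - β) ^ Fintype.card ι) :
    κ * Px {x | β < Pd (Prod.mk x ⁻¹' T)} ≤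
      (Px.prod (Measure.pi fun _ : ι => Pd)) {p | ∃ i, (p.1, p.2 i) ∈ T} := by
  have hS : MeasurableSet {p : X × (ι → D) | ∃ i, (p.1, p.2 i) ∈ T} := by
    simp only [Set.ofPred_exists]
    exact MeasurableSet.iUnion fun i =>
      hT.preimage (measurable_fst.prodMk ((measurable_pi_apply i).comp measurable_snd))
  rw [Measure.prod_apply hS]
  refine le_trans ?_ (mul_meas_ge_le_lintegral₀ (measurable_measure_prodMk_left hS).aemeasurable κ)
  refine mul_le_mul_right (measure_mono fun x hx => ?_) κ
  change κ ≤ Measure.pi (fun _ : ι => Pd) {d | ∃ i, d i ∈ Prod.mk x ⁻¹' T}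
  rw [measure_pi_exists_mem Pd (hT.preimage measurable_prodMk_left)]
  refine hκ.trans ?_
  gcongr
  exact hx.le

theorem ofReal_one_sub_div_le_measure_setOf_le {X D : Type*} [MeasurableSpace X]
    [MeasurableSpace D] (Px : Measure X) (Pd : Measure D) [IsProbabilityMeasure Px]
    [IsProbabilityMeasure Pd] {T : Set (X × D)} (hT : MeasurableSet T) {M : ℕ} {α₁ α₂ c : ℝ}
    (hα₁ : 0 ≤ α₁) (hα₂₀ : 0 ≤ α₂) (hα₂₁ : α₂ ≤ 1) (hc : 0 < c) (hpow : (1 - α₂) ^ M ≤ 1 - c)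
    (hjoint : (Px.prod (Measure.pi fun _ : Fin M => Pd)) {p | ∃ j, (p.1, p.2 j) ∈ T} ≤
      ENNReal.ofReal α₁) :
    ENNReal.ofReal (1 - α₁ / c) ≤ Px {x | Pd (Prod.mk x ⁻¹' T) ≤ ENNReal.ofReal α₂} := by
  have hκ : ENNReal.ofReal c ≤ 1 - (1 - ENNReal.ofReal α₂) ^ Fintype.card (Fin M) := by
    rw [Fintype.card_fin, ← ENNReal.ofReal_one, ← ENNReal.ofReal_sub _ hα₂₀,
      ← ENNReal.ofReal_pow (by linarith), ← ENNReal.ofReal_sub _ (by positivity)]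
    exact ENNReal.ofReal_le_ofReal (by linarith)
  have hbad : Px {x | ENNReal.ofReal α₂ < Pd (Prod.mk x ⁻¹' T)} ≤ ENNReal.ofReal (α₁ / c) := by
    rw [ENNReal.ofReal_div_of_pos hc, ENNReal.le_div_iff_mul_le (by simp [hc]) (by simp), mul_comm]
    exact (mul_measure_setOf_lt_le_prod_pi Px Pd hT hκ).trans hjoint
  have hgood : {x | Pd (Prod.mk x ⁻¹' T) ≤ ENNReal.ofReal α₂} =
      {x | ENNReal.ofReal α₂ < Pd (Prod.mk x ⁻¹' T)}ᶜ := by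
    ext x; simp
  rw [hgood, prob_compl_eq_one_sub (measurableSet_lt measurable_const
    (measurable_measure_prodMk_left hT)), ENNReal.ofReal_sub _ (by positivity), ENNReal.ofReal_one]
  exact tsub_le_tsub_left hbad 1

theorem pac_lift_one_to_many_bound_general {Ω X D : Type*}
    [MeasurableSpace Ω] [MeasurableSpace X] [MeasurableSpace D]
    (PS : Measure Ω) (Px : Measure X) (Pd : Measure D)
    [IsProbabilityMeasure PS] [IsProbabilityMeasure Px] [IsProbabilityMeasure Pd]
    (V : Set (Ω × X × D)) (hV : MeasurableSet V)
    (M : ℕ)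
    (α₁ α₂ l δ₁ δ₂ : ℝ)
    (hα₁ : α₁ ∈ Set.Ioo (0 : ℝ) 1) (hα₂ : α₂ ∈ Set.Ioo (0 : ℝ) 1)
    (hl : l ∈ Set.Ioo (0 : ℝ) 1)
    (hδ₂ : δ₂ ∈ Set.Ioo (0 : ℝ) 1)
    (hMbound : (M : ℝ) ≥ (1 / (2 * α₂ ^ 2)) * Real.log (1 / ((1 - l) * δ₂)))
    (hconf : PS {ω | (Px.prod (Measure.pi fun _ : Fin M => Pd))
        {p : X × (Fin M → D) | ∃ j, (ω, p.1, p.2 j) ∈ V} ≤ ENNReal.ofReal α₁} ≥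
      ENNReal.ofReal (1 - δ₁)) :
    PS {ω | Px {x | Pd {d | (ω, x, d) ∈ V} ≤ ENNReal.ofReal α₂} ≥
        ENNReal.ofReal (1 - α₁ / (l * δ₂))} ≥ ENNReal.ofReal (1 - δ₁) := by
  obtain ⟨hl₀, hl₁⟩ := hl
  obtain ⟨hδ₂₀, hδ₂₁⟩ := hδ₂
  have hpow : (1 - α₂) ^ M ≤ 1 - l * δ₂ :=
    (one_sub_pow_le_of_log_div_le hα₂.1 hα₂.2.le (by nlinarith) hMbound).trans (by nlinarith)
  exact hconf.trans <| measure_mono fun ω hω =>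
    ofReal_one_sub_div_le_measure_setOf_le Px Pd (hV.preimage measurable_prodMk_left) hα₁.1.le
      hα₂.1.le hα₂.2.le (by positivity) hpow hω

/-- Lifting the one-to-many slice bound through the sampling distribution: if, with
confidence `1 − δ₁` over the sample `ω`, the one-to-many joint violation probability is
at most `α₁`, and `M` meets the Hoeffding bound, then with the same confidence at least
a `1 − α₁/(l·δ₂)` fraction of states has slice violation probability at most `α₂`. -/
theorem pac_lift_one_to_many_bound {Ω X D : Type*}
    [MeasurableSpace Ω] [MeasurableSpace X] [MeasurableSpace D]
    (PS : Measure Ω) (Px : Measure X) (Pd : Measure D)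
    [IsProbabilityMeasure PS] [IsProbabilityMeasure Px] [IsProbabilityMeasure Pd]
    (V : Set (Ω × X × D)) (hV : MeasurableSet V)
    (M : ℕ) (hM : 1 ≤ M)
    (α₁ α₂ l δ₁ δ₂ : ℝ)
    (hα₁ : α₁ ∈ Set.Ioo (0 : ℝ) 1) (hα₂ : α₂ ∈ Set.Ioo (0 : ℝ) 1)
    (hl : l ∈ Set.Ioo (0 : ℝ) 1) (hδ₁ : δ₁ ∈ Set.Ioo (0 : ℝ) 1)
    (hδ₂ : δ₂ ∈ Set.Ioo (0 : ℝ) 1)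
    (hlt : α₁ < l * δ₂)
    (hMbound : (M : ℝ) ≥ (1 / (2 * α₂ ^ 2)) * Real.log (1 / ((1 - l) * δ₂)))
    (hconf : PS {ω | (Px.prod (Measure.pi fun _ : Fin M => Pd))
        {p : X × (Fin M → D) | ∃ j, (ω, p.1, p.2 j) ∈ V} ≤ ENNReal.ofReal α₁} ≥
      ENNReal.ofReal (1 - δ₁)) :
    PS {ω | Px {x | Pd {d | (ω, x, d) ∈ V} ≤ ENNReal.ofReal α₂} ≥
        ENNReal.ofReal (1 - α₁ / (l * δ₂))} ≥ ENNReal.ofReal (1 - δ₁) :=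
  pac_lift_one_to_many_bound_general PS Px Pd V hV M α₁ α₂ l δ₁ δ₂ hα₁ hα₂ hl hδ₂ hMbound hconf
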